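/- arXiv:1005.0768 — 8 statements merged into one kernel-verified Lean document; each statement's English description precedes it below -/
import Mathlib

section
/- Every solution of the liquidation value system is nonnegative; that is, if (r¹,…,r^m,s) ∈ (ℝ^n)^{m+1} satisfies the liquidation value system, then rⁱ ≥ 0 componentwise for every i = 1,…,m and s ≥ 0 componentwise. -/
open Matrix Finset Filter

noncomputable section

/-- Componentwise minimum of two vectors in ℝ^n. -/
def vmin {n : ℕ} (x y : Fin n → ℝ) : Fin n → ℝ := fun k => min (x k) (y k)

/-- Componentwise positive part of a vector in ℝ^n. -/
def vpos {n : ℕ} (x : Fin n → ℝ) : Fin n → ℝ := fun k => max (x k) 0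

/-- ℓ¹-norm of a vector in ℝ^n. -/
def l1 {n : ℕ} (x : Fin n → ℝ) : ℝ := ∑ k, |x k|

/-- An n×n matrix is strictly left substochastic if all entries are nonnegative
and every column sum is < 1. -/
def StrictlyLeftSubstochastic {n : ℕ} (M : Matrix (Fin n) (Fin n) ℝ) : Prop :=
  (∀ i j, 0 ≤ M i j) ∧ ∀ j, ∑ i, M i j < 1

/-- The liquidation value system: `r j` for `j = 0` is the highest-priority recovery claim,
`s` is equity. -/
def LiqSystem {n m : ℕ} (a : Fin n → ℝ) (Ms : Matrix (Fin n) (Fin n) ℝ)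
    (Md : Fin m → Matrix (Fin n) (Fin n) ℝ)
    (d : Fin m → (Fin m → Fin n → ℝ) → (Fin n → ℝ) → (Fin n → ℝ))
    (r : Fin m → Fin n → ℝ) (s : Fin n → ℝ) : Prop :=
  (∀ j : Fin m, (j : ℕ) = 0 →
    r j = vmin (d j r s) (a + Ms.mulVec s + ∑ i, (Md i).mulVec (r i))) ∧
  (∀ j : Fin m, (j : ℕ) ≠ 0 →
    r j = vmin (d j r s)
      (vpos (a + Ms.mulVec s + ∑ i, (Md i).mulVec (r i) - ∑ i ∈ Finset.Iio j, d i r s))) ∧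
  s = vpos (a + Ms.mulVec s + ∑ i, (Md i).mulVec (r i) - ∑ i, d i r s)

/-- I^max : the maximum column sum over all ownership matrices. -/
def Imax {n m : ℕ} (Ms : Matrix (Fin n) (Fin n) ℝ)
    (Md : Fin m → Matrix (Fin n) (Fin n) ℝ) : ℝ :=
  max (⨆ j, ∑ i, Ms i j) (⨆ l, ⨆ j, ∑ i, (Md l) i j)

/-!
Equity `s` and the lower-priority claims `r^{j+1}` are nonnegative by construction, being positive
parts or minima of nonnegative quantities. For the senior claim `r¹ = min (d¹, b + M r¹)`, where
`b ≥ 0` collects everything except the `M^{d,1} r¹` term, let `v = (r¹)⁻`. Where `r¹` is negative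
it equals `b + M r¹ ≥ -M v`, so `v ≤ M v`; summing over coordinates, the column sums of `M` being
`< 1` force `v = 0`.
-/

section Substochastic

variable {ι : Type*} [Fintype ι] {M : Matrix ι ι ℝ}

lemma mulVec_mono_of_nonneg (hM : ∀ i j, 0 ≤ M i j) {x y : ι → ℝ} (hxy : x ≤ y) :
    M *ᵥ x ≤ M *ᵥ y :=
  fun i => Finset.sum_le_sum fun j _ => mul_le_mul_of_nonneg_left (hxy j) (hM i j)

lemma mulVec_nonneg_of_nonneg (hM : ∀ i j, 0 ≤ M i j) {x : ι → ℝ} (hx : 0 ≤ x) :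
    0 ≤ M *ᵥ x := by
  simpa using mulVec_mono_of_nonneg hM hx

lemma sum_mulVec_eq_sum_colSum_mul (M : Matrix ι ι ℝ) (x : ι → ℝ) :
    ∑ i, (M *ᵥ x) i = ∑ j, (∑ i, M i j) * x j := by
  simp only [mulVec, dotProduct, Finset.sum_mul]
  exact Finset.sum_comm

lemma eq_zero_of_le_mulVec (hcol : ∀ j, ∑ i, M i j < 1) {v : ι → ℝ} (hv₀ : 0 ≤ v)
    (hv : v ≤ M *ᵥ v) : v = 0 := by
  by_contra hne
  obtain ⟨j, hj⟩ := Function.ne_iff.mp hne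
  have hpos : 0 < v j := lt_of_le_of_ne (hv₀ j) (Ne.symm hj)
  have hlt : ∑ j, (∑ i, M i j) * v j < ∑ j, v j :=
    Finset.sum_lt_sum (fun k _ => mul_le_of_le_one_left (hv₀ k) (hcol k).le)
      ⟨j, Finset.mem_univ j, mul_lt_of_lt_one_left hpos (hcol j)⟩
  have hle : ∑ i, v i ≤ ∑ i, (M *ᵥ v) i := Finset.sum_le_sum fun i _ => hv i
  rw [sum_mulVec_eq_sum_colSum_mul] at hle
  linarith

lemma nonneg_of_eq_min_add_mulVec (hM : ∀ i j, 0 ≤ M i j) (hcol : ∀ j, ∑ i, M i j < 1)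
    {b c x : ι → ℝ} (hb : 0 ≤ b) (hc : 0 ≤ c) (hx : ∀ k, x k = min (c k) (b k + (M *ᵥ x) k)) :
    0 ≤ x := by
  set v : ι → ℝ := fun k => (x k)⁻
  have hv₀ : 0 ≤ v := fun k => negPart_nonneg (x k)
  have hxv : -v ≤ x := fun k => neg_le.mp (neg_le_negPart (x k))
  have hv : v ≤ M *ᵥ v := by
    intro k
    rcases le_or_gt 0 (x k) with hxk | hxk
    · simpa [v, negPart_eq_zero.mpr hxk] using mulVec_nonneg_of_nonneg hM hv₀ k
    · have hxk' : x k = b k + (M *ᵥ x) k := by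
        rcases min_choice (c k) (b k + (M *ᵥ x) k) with h | h
        · have := hx k
          rw [h] at this
          linarith [show (0 : ℝ) ≤ c k from hc k]
        · rw [hx k, h]
      have hMx : -(M *ᵥ v) k ≤ (M *ᵥ x) k := by
        simpa [mulVec_neg] using mulVec_mono_of_nonneg hM hxv k
      have hvk : v k = -x k := negPart_eq_neg.mpr hxk.le
      linarith [show (0 : ℝ) ≤ b k from hb k]
  have hv_zero := eq_zero_of_le_mulVec hcol hv₀ hv
  intro k
  simpa [hv_zero] using hxv k

end Substochastic

theorem nonneg_of_liqSystem_general {n m : ℕ}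
    (a : Fin n → ℝ) (ha : ∀ k, 0 ≤ a k)
    (Ms : Matrix (Fin n) (Fin n) ℝ) (hMs : StrictlyLeftSubstochastic Ms)
    (Md : Fin m → Matrix (Fin n) (Fin n) ℝ) (hMd : ∀ i, StrictlyLeftSubstochastic (Md i))
    (d : Fin m → (Fin m → Fin n → ℝ) → (Fin n → ℝ) → (Fin n → ℝ))
    (hd : ∀ i r s k, 0 ≤ d i r s k)
    (r : Fin m → Fin n → ℝ) (s : Fin n → ℝ)
    (hsol : LiqSystem a Ms Md d r s) :
    (∀ i k, 0 ≤ r i k) ∧ (∀ k, 0 ≤ s k) := by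
  obtain ⟨hsenior, hjunior, hs⟩ := hsol
  have hs₀ : ∀ k, 0 ≤ s k := fun k => by rw [hs]; exact le_max_right _ _
  have hjunior₀ : ∀ j : Fin m, (j : ℕ) ≠ 0 → ∀ k, 0 ≤ r j k := fun j hj k => by
    rw [hjunior j hj]; exact le_min (hd _ _ _ _) (le_max_right _ _)
  refine ⟨fun j => ?_, hs₀⟩
  by_cases hj : (j : ℕ) = 0
  swap
  · exact hjunior₀ j hj
  set b := a + Ms *ᵥ s + ∑ i ∈ Finset.univ.erase j, Md i *ᵥ r i
  have hb : 0 ≤ b := by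
    refine add_nonneg (add_nonneg ha (mulVec_nonneg_of_nonneg hMs.1 hs₀)) ?_
    refine Finset.sum_nonneg fun i hi => mulVec_nonneg_of_nonneg (hMd i).1 (hjunior₀ i ?_)
    exact fun hi₀ => Finset.ne_of_mem_erase hi (Fin.ext (hi₀.trans hj.symm))
  refine nonneg_of_eq_min_add_mulVec (hMd j).1 (hMd j).2 hb (hd j r s) fun k => ?_
  rw [congrFun (hsenior j hj) k, ← Finset.add_sum_erase _ _ (Finset.mem_univ j)]
  simp only [vmin, b, Pi.add_apply, Finset.sum_apply]
  ring_nf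

/-- Every solution of the liquidation value system is nonnegative. -/
theorem nonneg_of_liqSystem {n m : ℕ} (hn : 0 < n) (hm : 0 < m)
    (a : Fin n → ℝ) (ha : ∀ k, 0 ≤ a k)
    (Ms : Matrix (Fin n) (Fin n) ℝ) (hMs : StrictlyLeftSubstochastic Ms)
    (Md : Fin m → Matrix (Fin n) (Fin n) ℝ) (hMd : ∀ i, StrictlyLeftSubstochastic (Md i))
    (d : Fin m → (Fin m → Fin n → ℝ) → (Fin n → ℝ) → (Fin n → ℝ))
    (hd : ∀ i r s k, 0 ≤ d i r s k)
    (r : Fin m → Fin n → ℝ) (s : Fin n → ℝ)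
    (hsol : LiqSystem a Ms Md d r s) :
    (∀ i k, 0 ≤ r i k) ∧ (∀ k, 0 ≤ s k) :=
  nonneg_of_liqSystem_general a ha Ms hMs Md hMd d hd r s hsol
end
end

section
/- Every solution of the liquidation value system satisfies the accounting equation componentwise: if (r¹,…,r^m,s) solves the system, then a + Mˢ·s + Σ_{i=1}^m M^{d,i}·rⁱ = s + Σ_{i=1}^m rⁱ (equality of vectors in ℝ^n). -/
/-! Write `A` for a firm's total assets `a + Mˢ s + Σ M^{d,i} rⁱ` and `Dⱼ` for its first `j`
liabilities. Since each tranche takes the minimum of its claim and what is left, an induction over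
the priority order shows that after tranches `1, …, j` exactly `(A - Dⱼ)⁺` is left, so the tranches
receive `A - (A - Dₘ)⁺` in total; equity is the remainder `(A - Dₘ)⁺`, and the two add up to `A`. -/

open Matrix Finset Filter

noncomputable section

section LinearOrderedAddCommGroup

variable {α : Type*} [AddCommGroup α] [LinearOrder α] [IsOrderedAddMonoid α]

theorem min_eq_sub_max_sub (x y : α) : min x y = y - max (y - x) 0 := by
  rcases le_total x y with h | h
  · rw [min_eq_left h, max_eq_left (sub_nonneg.2 h), sub_sub_cancel]
  · rw [min_eq_right h, max_eq_right (sub_nonpos.2 h), sub_zero]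

theorem min_max_zero_eq_sub (x : α) {e : α} (he : 0 ≤ e) :
    min e (max x 0) = max x 0 - max (x - e) 0 := by
  have hshift : max (max x 0 - e) 0 = max (x - e) 0 := by
    rw [← max_sub_sub_right, max_assoc, max_eq_right (sub_nonpos.2 (by simpa using he))]
  rw [min_eq_sub_max_sub, hshift]

end LinearOrderedAddCommGroup

def IsWaterfall {m : ℕ} (A : ℝ) (e p : Fin m → ℝ) : Prop :=
  (∀ j : Fin m, (j : ℕ) = 0 → p j = min (e j) A) ∧
  ∀ j : Fin m, (j : ℕ) ≠ 0 → p j = min (e j) (max (A - ∑ i ∈ Iio j, e i) 0)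

namespace IsWaterfall

variable {m : ℕ} {A : ℝ} {e p : Fin m → ℝ}

theorem sum_Iic (hw : IsWaterfall A e p) (he : ∀ i, 0 ≤ e i) (j : Fin m) :
    ∑ i ∈ Iic j, p i = A - max (A - ∑ i ∈ Iic j, e i) 0 := by
  obtain ⟨k, rfl⟩ : ∃ k, m = k + 1 := Nat.exists_eq_add_one_of_ne_zero j.pos.ne'
  induction j using Fin.induction with
  | zero =>
    have hIic : Iic (0 : Fin (k + 1)) = {0} := by
      ext i; simp
    rw [hIic, sum_singleton, sum_singleton, hw.1 0 rfl, min_eq_sub_max_sub]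
  | succ j ih =>
    have hIio : Iio j.succ = Iic j.castSucc := by
      ext i; simp only [mem_Iio, mem_Iic, Fin.lt_def, Fin.le_def, Fin.val_succ,
        Fin.val_castSucc]; omega
    rw [← Iio_insert, sum_insert notMem_Iio_self, sum_insert notMem_Iio_self, hIio, ih,
      hw.2 j.succ (by simp), hIio, min_max_zero_eq_sub _ (he _), sub_sub, add_comm (e j.succ)]
    ring

theorem sum_eq (hw : IsWaterfall A e p) (he : ∀ i, 0 ≤ e i) (hm : 0 < m) :
    ∑ i, p i = A - max (A - ∑ i, e i) 0 := by
  obtain ⟨k, rfl⟩ : ∃ k, m = k + 1 := Nat.exists_eq_add_one_of_ne_zero hm.ne'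
  simpa only [Iic_top] using hw.sum_Iic he ⊤

end IsWaterfall

namespace LiqSystem

variable {n m : ℕ} {a : Fin n → ℝ} {Ms : Matrix (Fin n) (Fin n) ℝ}
  {Md : Fin m → Matrix (Fin n) (Fin n) ℝ}
  {d : Fin m → (Fin m → Fin n → ℝ) → (Fin n → ℝ) → (Fin n → ℝ)}
  {r : Fin m → Fin n → ℝ} {s : Fin n → ℝ}

theorem isWaterfall (hsol : LiqSystem a Ms Md d r s) (k : Fin n) :
    IsWaterfall ((a + Ms.mulVec s + ∑ i, (Md i).mulVec (r i)) k) (fun i => d i r s k)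
      (fun i => r i k) :=
  ⟨fun j hj => by simpa only [vmin, Pi.add_apply] using congrFun (hsol.1 j hj) k,
   fun j hj => by
    simpa only [vmin, vpos, Pi.add_apply, Pi.sub_apply, Finset.sum_apply]
      using congrFun (hsol.2.1 j hj) k⟩

theorem equity_apply (hsol : LiqSystem a Ms Md d r s) (k : Fin n) :
    s k = max ((a + Ms.mulVec s + ∑ i, (Md i).mulVec (r i)) k - ∑ i, d i r s k) 0 := by
  simpa only [vpos, Pi.sub_apply, Finset.sum_apply] using congrFun hsol.2.2 k

end LiqSystem

theorem accounting_equation_general {n m : ℕ} (hm : 0 < m)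
    (a : Fin n → ℝ)
    (Ms : Matrix (Fin n) (Fin n) ℝ)
    (Md : Fin m → Matrix (Fin n) (Fin n) ℝ)
    (d : Fin m → (Fin m → Fin n → ℝ) → (Fin n → ℝ) → (Fin n → ℝ))
    (hd : ∀ i r s k, 0 ≤ d i r s k)
    (r : Fin m → Fin n → ℝ) (s : Fin n → ℝ)
    (hsol : LiqSystem a Ms Md d r s) :
    a + Ms.mulVec s + ∑ i, (Md i).mulVec (r i) = s + ∑ i, r i := by
  funext k
  have hpaid := (hsol.isWaterfall k).sum_eq (fun i => hd i r s k) hm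
  rw [Pi.add_apply s, Finset.sum_apply, hpaid, hsol.equity_apply k]
  ring

/-- Accounting equation: assets + receivables = equity + payable liabilities, per firm. -/
theorem accounting_equation {n m : ℕ} (hn : 0 < n) (hm : 0 < m)
    (a : Fin n → ℝ) (ha : ∀ k, 0 ≤ a k)
    (Ms : Matrix (Fin n) (Fin n) ℝ) (hMs : StrictlyLeftSubstochastic Ms)
    (Md : Fin m → Matrix (Fin n) (Fin n) ℝ) (hMd : ∀ i, StrictlyLeftSubstochastic (Md i))
    (d : Fin m → (Fin m → Fin n → ℝ) → (Fin n → ℝ) → (Fin n → ℝ))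
    (hd : ∀ i r s k, 0 ≤ d i r s k)
    (r : Fin m → Fin n → ℝ) (s : Fin n → ℝ)
    (hsol : LiqSystem a Ms Md d r s) :
    a + Ms.mulVec s + ∑ i, (Md i).mulVec (r i) = s + ∑ i, r i :=
  accounting_equation_general hm a Ms Md d hd r s hsol
end
end

section
/- Capital structure irrelevance: for every solution (r¹,…,r^m,s) of the liquidation value system, the total value of externally held claims equals the total value of the exogenous assets, i.e. (‖s‖₁ + Σ_{i=1}^m ‖rⁱ‖₁) − (‖Mˢ·s‖₁ + Σ_{i=1}^m ‖M^{d,i}·rⁱ‖₁) = ‖a‖₁. -/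
/-!
Write `A = a + Mˢ s + Σᵢ M^{d,i} rⁱ` for the asset value. Where `A ≥ 0`, the system is a
priority waterfall that splits `A` exactly into the claims and the equity: `s + Σᵢ rⁱ = A`.
Equity and the junior claims are nonnegative by construction; the senior claim can only be
negative where it equals `A`, and then its negative part `f` satisfies `f ≤ M^{d,1} f`, which
the column sums `< 1` force to vanish. So `A ≥ 0`, every vector involved is nonnegative, the
`ℓ¹`-norms are plain sums of entries, and summing `s + Σᵢ rⁱ = A` over the entries gives the claim.
-/

open Matrix Finset Filter

noncomputable section

lemma vpos_nonneg {n : ℕ} (x : Fin n → ℝ) : 0 ≤ vpos x := fun _ => le_max_right _ _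

lemma vmin_nonneg {n : ℕ} {x y : Fin n → ℝ} (hx : 0 ≤ x) (hy : 0 ≤ y) : 0 ≤ vmin x y :=
  fun k => le_min (hx k) (hy k)

lemma l1_of_nonneg {n : ℕ} {x : Fin n → ℝ} (hx : 0 ≤ x) : l1 x = ∑ k, x k :=
  Finset.sum_congr rfl fun k _ => abs_of_nonneg (hx k)

lemma l1_add {n : ℕ} {x y : Fin n → ℝ} (hx : 0 ≤ x) (hy : 0 ≤ y) :
    l1 (x + y) = l1 x + l1 y := by
  simp only [l1_of_nonneg (add_nonneg hx hy), l1_of_nonneg hx, l1_of_nonneg hy, Pi.add_apply,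
    Finset.sum_add_distrib]

lemma l1_sum {ι : Type*} {m : ℕ} {t : Finset ι} {x : ι → Fin m → ℝ} (hx : ∀ i ∈ t, 0 ≤ x i) :
    l1 (∑ i ∈ t, x i) = ∑ i ∈ t, l1 (x i) := by
  rw [l1_of_nonneg (Finset.sum_nonneg hx), Finset.sum_congr rfl fun i hi => l1_of_nonneg (hx i hi)]
  simp only [Finset.sum_apply]
  exact Finset.sum_comm

lemma mulVec_nonneg {ι κ : Type*} [Fintype ι] {M : Matrix κ ι ℝ} (hM : ∀ i j, 0 ≤ M i j)
    {x : ι → ℝ} (hx : 0 ≤ x) : 0 ≤ M *ᵥ x :=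
  fun k => dotProduct_nonneg_of_nonneg (hM k) hx

lemma mulVec_mono {ι κ : Type*} [Fintype ι] {M : Matrix κ ι ℝ} (hM : ∀ i j, 0 ≤ M i j)
    {x y : ι → ℝ} (hxy : x ≤ y) : M *ᵥ x ≤ M *ᵥ y := by
  have := mulVec_nonneg hM (sub_nonneg.2 hxy)
  rwa [mulVec_sub, sub_nonneg] at this

namespace StrictlyLeftSubstochastic

variable {n : ℕ} {M : Matrix (Fin n) (Fin n) ℝ}

/-- Summing `f ≤ M f` over the rows gives `∑ⱼ (1 - colsumⱼ M) fⱼ ≤ 0`, a sum of nonnegative terms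
with positive weights. -/
lemma eq_zero_of_le_mulVec (hM : StrictlyLeftSubstochastic M) {f : Fin n → ℝ} (hf : 0 ≤ f)
    (hfM : f ≤ M *ᵥ f) : f = 0 := by
  have hslack : ∀ j, 0 ≤ (1 - ∑ i, M i j) * f j :=
    fun j => mul_nonneg (sub_nonneg.2 (hM.2 j).le) (hf j)
  have htotal : ∑ j, (1 - ∑ i, M i j) * f j ≤ 0 :=
    calc ∑ j, (1 - ∑ i, M i j) * f j = ∑ i, f i - ∑ i, (M *ᵥ f) i := by
          simp only [sub_mul, one_mul, Finset.sum_sub_distrib, Finset.sum_mul, mulVec,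
            dotProduct]
          rw [Finset.sum_comm]
      _ ≤ 0 := sub_nonpos.2 (Finset.sum_le_sum fun i _ => hfM i)
  have hzero := (Finset.sum_eq_zero_iff_of_nonneg fun j _ => hslack j).1
    (le_antisymm htotal (Finset.sum_nonneg fun j _ => hslack j))
  funext j
  exact (mul_eq_zero.1 (hzero j (Finset.mem_univ j))).resolve_left (by linarith [hM.2 j])

/-- The negative part `(-x)⁺` satisfies the hypothesis of `eq_zero_of_le_mulVec`. -/
lemma nonneg_of_mulVec_le_of_neg (hM : StrictlyLeftSubstochastic M) {x : Fin n → ℝ}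
    (hx : ∀ k, x k < 0 → (M *ᵥ x) k ≤ x k) : 0 ≤ x := by
  have hneg : -x ≤ vpos (-x) := fun k => le_max_left _ _
  have hfM : vpos (-x) ≤ M *ᵥ vpos (-x) := by
    intro k
    by_cases hk : x k < 0
    · calc vpos (-x) k = -x k := max_eq_left (by simp only [Pi.neg_apply]; linarith)
        _ ≤ (M *ᵥ -x) k := by rw [mulVec_neg]; exact neg_le_neg (hx k hk)
        _ ≤ (M *ᵥ vpos (-x)) k := mulVec_mono hM.1 hneg k
    · calc vpos (-x) k = 0 := max_eq_right (by simp only [Pi.neg_apply]; linarith)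
        _ ≤ (M *ᵥ vpos (-x)) k := mulVec_nonneg hM.1 (vpos_nonneg _) k
  have hf := hM.eq_zero_of_le_mulVec (vpos_nonneg _) hfM
  intro k
  simpa [hf] using hneg k

end StrictlyLeftSubstochastic

lemma min_add_eq_min_add_min {A S g : ℝ} (hg : 0 ≤ g) :
    min A (S + g) = min A S + min g (max (A - S) 0) := by
  rcases le_total A S with h | h <;> rcases le_total A (S + g) with h' | h' <;>
    simp only [min_def, max_def] <;> split_ifs <;> linarith

/-- Paying claims `g 0, g 1, …` in order of priority out of `A ≥ 0` pays out `min A (∑ g)`. -/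
lemma sum_min_max_sub_sum_Iio {A : ℝ} (hA : 0 ≤ A) :
    ∀ {m : ℕ} (g : Fin m → ℝ), 0 ≤ g →
      ∑ j, min (g j) (max (A - ∑ i ∈ Finset.Iio j, g i) 0) = min A (∑ j, g j)
  | 0, _, _ => by simp [hA]
  | m + 1, g, hg => by
    rw [Fin.sum_univ_castSucc, Fin.sum_univ_castSucc g, min_add_eq_min_add_min (hg _),
      ← sum_min_max_sub_sum_Iio hA (fun i => g i.castSucc) fun i => hg _, Fin.Iio_last_eq_map,
      Finset.sum_map]
    simp only [Fin.sum_Iio_castSucc, Fin.coe_castSuccEmb]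

namespace LiqSystem

variable {n m : ℕ} {a : Fin n → ℝ} {Ms : Matrix (Fin n) (Fin n) ℝ}
  {Md : Fin m → Matrix (Fin n) (Fin n) ℝ}
  {d : Fin m → (Fin m → Fin n → ℝ) → (Fin n → ℝ) → (Fin n → ℝ)}
  {r : Fin m → Fin n → ℝ} {s : Fin n → ℝ}

lemma equity_nonneg (h : LiqSystem a Ms Md d r s) : 0 ≤ s := h.2.2 ▸ vpos_nonneg _

lemma recovery_nonneg_of_ne_zero (hd : ∀ i r s, 0 ≤ d i r s) (h : LiqSystem a Ms Md d r s)
    {j : Fin m} (hj : (j : ℕ) ≠ 0) : 0 ≤ r j :=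
  h.2.1 j hj ▸ vmin_nonneg (hd _ _ _) (vpos_nonneg _)

/-- The senior claim is the only one not truncated at zero; where it is negative it equals the
asset value, which dominates its own cross-holding term, so the substochasticity of `Md j` rules
this out. -/
lemma recovery_nonneg (ha : 0 ≤ a) (hMs : ∀ i j, 0 ≤ Ms i j)
    (hMd : ∀ i, StrictlyLeftSubstochastic (Md i)) (hd : ∀ i r s, 0 ≤ d i r s)
    (h : LiqSystem a Ms Md d r s) (j : Fin m) : 0 ≤ r j := by
  obtain hj | hj := ne_or_eq (j : ℕ) 0
  · exact h.recovery_nonneg_of_ne_zero hd hj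
  refine (hMd j).nonneg_of_mulVec_le_of_neg fun k hk => ?_
  have hother : 0 ≤ ∑ i ∈ Finset.univ.erase j, (Md i *ᵥ r i) k := by
    refine Finset.sum_nonneg fun i hi => mulVec_nonneg (hMd i).1 ?_ k
    refine h.recovery_nonneg_of_ne_zero hd fun hi0 => (Finset.mem_erase.1 hi).1 (Fin.ext ?_)
    rw [hi0, hj]
  have hrk : r j k = (a + Ms *ᵥ s + ∑ i, Md i *ᵥ r i) k := by
    have hmin := congrFun (h.1 j hj) k
    simp only [vmin] at hmin
    rcases min_choice (d j r s k) ((a + Ms *ᵥ s + ∑ i, Md i *ᵥ r i) k) with hc | hc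
    · have hdk : (0 : ℝ) ≤ d j r s k := hd j r s k
      linarith
    · rw [hmin, hc]
  rw [hrk, Pi.add_apply, Pi.add_apply, Finset.sum_apply,
    ← Finset.add_sum_erase _ _ (Finset.mem_univ j)]
  have hak : (0 : ℝ) ≤ a k := ha k
  have hMsk : (0 : ℝ) ≤ (Ms *ᵥ s) k := mulVec_nonneg hMs h.equity_nonneg k
  linarith

/-- Once the asset value is nonnegative, the senior equation is the `j = 0` case of the junior
ones, and the waterfall distributes exactly the asset value among claims and equity. -/
lemma equity_add_sum_recovery (hd : ∀ i r s, 0 ≤ d i r s)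
    (hA : 0 ≤ a + Ms *ᵥ s + ∑ i, Md i *ᵥ r i) (h : LiqSystem a Ms Md d r s) :
    s + ∑ i, r i = a + Ms *ᵥ s + ∑ i, Md i *ᵥ r i := by
  set A := a + Ms *ᵥ s + ∑ i, Md i *ᵥ r i
  have hr : ∀ j, r j = vmin (d j r s) (vpos (A - ∑ i ∈ Finset.Iio j, d i r s)) := by
    intro j
    by_cases hj : (j : ℕ) = 0
    · have hIio : Finset.Iio j = ∅ :=
        Finset.Iio_eq_empty.2 fun i _ => Fin.le_def.2 (by omega)
      rw [h.1 j hj, hIio, Finset.sum_empty, sub_zero]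
      congr 1
      funext k
      exact (max_eq_left (hA k)).symm
    · exact h.2.1 j hj
  funext k
  have hrecovery : ∑ j, r j k = min (A k) (∑ j, d j r s k) := by
    rw [← sum_min_max_sub_sum_Iio (hA k) (fun j => d j r s k) fun j => hd j r s k]
    refine Finset.sum_congr rfl fun j _ => ?_
    rw [hr j]
    simp only [vmin, vpos, Pi.sub_apply, Finset.sum_apply]
  have hequity : s k = max (A k - ∑ j, d j r s k) 0 := by
    simpa only [vpos, Pi.sub_apply, Finset.sum_apply] using congrFun h.2.2 k
  rw [Pi.add_apply, Finset.sum_apply, hrecovery, hequity]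
  rcases le_total (A k) (∑ j, d j r s k) with hle | hle
  · rw [min_eq_left hle, max_eq_right (by linarith)]; ring
  · rw [min_eq_right hle, max_eq_left (by linarith)]; ring

end LiqSystem

theorem capital_structure_irrelevance_general {n m : ℕ}
    (a : Fin n → ℝ) (ha : ∀ k, 0 ≤ a k)
    (Ms : Matrix (Fin n) (Fin n) ℝ) (hMs : StrictlyLeftSubstochastic Ms)
    (Md : Fin m → Matrix (Fin n) (Fin n) ℝ) (hMd : ∀ i, StrictlyLeftSubstochastic (Md i))
    (d : Fin m → (Fin m → Fin n → ℝ) → (Fin n → ℝ) → (Fin n → ℝ))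
    (hd : ∀ i r s k, 0 ≤ d i r s k)
    (r : Fin m → Fin n → ℝ) (s : Fin n → ℝ)
    (hsol : LiqSystem a Ms Md d r s) :
    (l1 s + ∑ i, l1 (r i)) - (l1 (Ms.mulVec s) + ∑ i, l1 ((Md i).mulVec (r i))) = l1 a := by
  have hd_nonneg : ∀ i r s, 0 ≤ d i r s := fun i r s k => hd i r s k
  have hs := hsol.equity_nonneg
  have hr := hsol.recovery_nonneg ha hMs.1 hMd hd_nonneg
  have hMss := mulVec_nonneg hMs.1 hs
  have hMdr : ∀ i ∈ Finset.univ, 0 ≤ Md i *ᵥ r i := fun i _ => mulVec_nonneg (hMd i).1 (hr i)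
  have hbalance := congrArg l1 <| hsol.equity_add_sum_recovery hd_nonneg
    (add_nonneg (add_nonneg ha hMss) (Finset.sum_nonneg hMdr))
  rw [l1_add hs (Finset.sum_nonneg fun i _ => hr i), l1_sum fun i _ => hr i,
    l1_add (add_nonneg ha hMss) (Finset.sum_nonneg hMdr), l1_add ha hMss, l1_sum hMdr]
    at hbalance
  linarith

/-- Capital structure irrelevance: the total value of externally held claims equals
the total value of the exogenous assets. -/
theorem capital_structure_irrelevance {n m : ℕ} (hn : 0 < n) (hm : 0 < m)
    (a : Fin n → ℝ) (ha : ∀ k, 0 ≤ a k)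
    (Ms : Matrix (Fin n) (Fin n) ℝ) (hMs : StrictlyLeftSubstochastic Ms)
    (Md : Fin m → Matrix (Fin n) (Fin n) ℝ) (hMd : ∀ i, StrictlyLeftSubstochastic (Md i))
    (d : Fin m → (Fin m → Fin n → ℝ) → (Fin n → ℝ) → (Fin n → ℝ))
    (hd : ∀ i r s k, 0 ≤ d i r s k)
    (r : Fin m → Fin n → ℝ) (s : Fin n → ℝ)
    (hsol : LiqSystem a Ms Md d r s) :
    (l1 s + ∑ i, l1 (r i)) - (l1 (Ms.mulVec s) + ∑ i, l1 ((Md i).mulVec (r i))) = l1 a :=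
  capital_structure_irrelevance_general a ha Ms hMs Md hMd d hd r s hsol
end
end

section
/- Contraction property: under the seniority structure condition on the liability functions, the map Φ : ℝ^{n(m+1)} → ℝ^{n(m+1)} sending (r¹,…,r^m,s) to the tuple of right-hand sides of the liquidation value system satisfies ‖Φ(x) − Φ(y)‖₁ ≤ I^max · ‖x − y‖₁ for all x, y ∈ ℝ^{n(m+1)}; in particular, since I^max < 1, Φ is a strict contraction with respect to the ℓ¹-metric. -/
/-!
At each bank `k` the right-hand sides of the system depend on `(r, s)` only through the scalar
`w = (Mˢ s)ₖ + Σₗ (M^{d,l} rˡ)ₖ`: the cash `aₖ + w` is paid along a waterfall to the claims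
`ψⁱₖ(w)` in order of seniority, and what is left is equity. The payments and the equity add up to
the cash, and under the seniority structure condition each of them is monotone in `w`; hence
their total variation is exactly `|Δw|`. Summing over banks, `Σₖ |Δwₖ| ≤ I^max ‖x − y‖₁` since the
ownership matrices are nonnegative with column sums at most `I^max`.
-/

open Matrix Finset Filter

noncomputable section

/-- The map Φ sending (r¹,…,r^m,s) to the tuple of right-hand sides of the
liquidation value system. -/
def Phi {n m : ℕ} (a : Fin n → ℝ) (Ms : Matrix (Fin n) (Fin n) ℝ)
    (Md : Fin m → Matrix (Fin n) (Fin n) ℝ)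
    (d : Fin m → (Fin m → Fin n → ℝ) → (Fin n → ℝ) → (Fin n → ℝ)) :
    ((Fin m → Fin n → ℝ) × (Fin n → ℝ)) → ((Fin m → Fin n → ℝ) × (Fin n → ℝ)) :=
  fun p =>
    (fun j =>
      if (j : ℕ) = 0 then
        vmin (d j p.1 p.2) (a + Ms.mulVec p.2 + ∑ i, (Md i).mulVec (p.1 i))
      else
        vmin (d j p.1 p.2)
          (vpos (a + Ms.mulVec p.2 + ∑ i, (Md i).mulVec (p.1 i) -
            ∑ i ∈ Finset.Iio j, d i p.1 p.2)),
     vpos (a + Ms.mulVec p.2 + ∑ i, (Md i).mulVec (p.1 i) - ∑ i, d i p.1 p.2))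

/-- ℓ¹-norm on ℝ^{n(m+1)} = (ℝ^n)^m × ℝ^n. -/
def l1P {n m : ℕ} (p : (Fin m → Fin n → ℝ) × (Fin n → ℝ)) : ℝ :=
  (∑ i, l1 (p.1 i)) + l1 p.2

namespace Waterfall

variable {m : ℕ}

def payout (C : ℝ) (g : Fin m → ℝ) (j : Fin m) : ℝ :=
  if (j : ℕ) = 0 then min (g j) C else min (g j) (max (C - ∑ i ∈ Iio j, g i) 0)

def surplus (C : ℝ) (g : Fin m → ℝ) : ℝ :=
  max (C - ∑ i, g i) 0

lemma min_add_min_max_sub {C P p : ℝ} (hp : 0 ≤ p) :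
    min C P + min p (max (C - P) 0) = min C (P + p) := by
  rcases le_total C P with h | h <;> rcases le_total C (P + p) with h' | h' <;>
    simp only [min_def, max_def] <;> split_ifs <;> linarith

lemma payout_castSucc (C : ℝ) (g : Fin (m + 1) → ℝ) (j : Fin m) :
    payout C g j.castSucc = payout C (fun i => g i.castSucc) j := by
  simp [payout, Fin.sum_Iio_castSucc]

lemma payout_last (C : ℝ) (g : Fin (m + 2) → ℝ) :
    payout C g (Fin.last (m + 1)) =
      min (g (Fin.last (m + 1))) (max (C - ∑ i : Fin (m + 1), g i.castSucc) 0) := by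
  simp [payout, Fin.Iio_last_eq_map]

lemma sum_payout_eq_min (C : ℝ) {g : Fin (m + 1) → ℝ} (hg : 0 ≤ g) :
    ∑ j, payout C g j = min C (∑ j, g j) := by
  induction m with
  | zero => simp [payout, min_comm]
  | succ m ih =>
    rw [Fin.sum_univ_castSucc, Fin.sum_univ_castSucc g]
    simp only [payout_castSucc, payout_last]
    rw [ih fun i => hg _, min_add_min_max_sub (hg _)]

lemma sum_payout_add_surplus (C : ℝ) (hm : 0 < m) {g : Fin m → ℝ} (hg : 0 ≤ g) :
    ∑ j, payout C g j + surplus C g = C := by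
  obtain ⟨m, rfl⟩ := Nat.exists_eq_add_one_of_ne_zero hm.ne'
  rw [sum_payout_eq_min C hg, surplus]
  rcases le_total C (∑ j, g j) with h | h <;> simp only [min_def, max_def] <;> split_ifs <;>
    linarith

section Monotone

variable {C C' : ℝ} {g g' : Fin m → ℝ}

lemma payout_mono (hg : g ≤ g') (hC : ∑ i, (g' i - g i) ≤ C' - C) (j : Fin m) :
    payout C g j ≤ payout C' g' j := by
  have hIio : ∑ i ∈ Iio j, (g' i - g i) ≤ C' - C :=
    (sum_le_sum_of_subset_of_nonneg (subset_univ _) fun i _ _ => sub_nonneg.2 (hg i)).trans hC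
  have hCC' : 0 ≤ C' - C := (sum_nonneg fun i _ => sub_nonneg.2 (hg i)).trans hIio
  rw [sum_sub_distrib] at hIio
  unfold payout
  split_ifs
  · exact min_le_min (hg j) (by linarith)
  · exact min_le_min (hg j) (max_le_max_right 0 (by linarith))

lemma surplus_mono (hC : ∑ i, (g' i - g i) ≤ C' - C) : surplus C g ≤ surplus C' g' := by
  rw [sum_sub_distrib] at hC
  exact max_le_max_right 0 (by linarith)

-- All payments and the surplus move up together, so their total variation is the change of
-- their sum, which is the cash.
lemma sum_abs_payout_sub_add_abs_surplus_sub (hm : 0 < m) (hg₀ : 0 ≤ g) (hg : g ≤ g')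
    (hC : ∑ i, (g' i - g i) ≤ C' - C) :
    ∑ j, |payout C' g' j - payout C g j| + |surplus C' g' - surplus C g| = C' - C := by
  have h := sum_payout_add_surplus C hm hg₀
  have h' := sum_payout_add_surplus C' hm (hg₀.trans hg)
  simp only [abs_of_nonneg (sub_nonneg.2 (payout_mono hg hC _)),
    abs_of_nonneg (sub_nonneg.2 (surplus_mono hC)), sum_sub_distrib]
  linarith

end Monotone

lemma sum_abs_payout_sub_add_abs_surplus_sub_eq_abs (hm : 0 < m) {ψ : Fin m → ℝ → ℝ}
    (hψ₀ : ∀ i y, 0 ≤ ψ i y) (hψ : ∀ i, Monotone (ψ i))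
    (hψ_sum : ∀ y₁ y₂, y₂ ≤ y₁ → ∑ i, (ψ i y₁ - ψ i y₂) ≤ y₁ - y₂) (c w w' : ℝ) :
    ∑ j, |payout (c + w) (ψ · w) j - payout (c + w') (ψ · w') j|
      + |surplus (c + w) (ψ · w) - surplus (c + w') (ψ · w')| = |w - w'| := by
  wlog h : w' ≤ w generalizing w w'
  · simpa only [abs_sub_comm] using this w' w (le_of_not_ge h)
  rw [abs_of_nonneg (sub_nonneg.2 h),
    sum_abs_payout_sub_add_abs_surplus_sub hm (fun i => hψ₀ i w') (fun i => hψ i h)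
      (by simpa using hψ_sum w w' h)]
  ring

end Waterfall

section L1

variable {n : ℕ}

lemma l1_add_le (u v : Fin n → ℝ) : l1 (u + v) ≤ l1 u + l1 v := by
  rw [l1, l1, l1, ← sum_add_distrib]
  exact sum_le_sum fun k _ => abs_add_le _ _

lemma l1_sum_le {ι : Type*} (s : Finset ι) (f : ι → Fin n → ℝ) :
    l1 (∑ i ∈ s, f i) ≤ ∑ i ∈ s, l1 (f i) := by
  simp only [l1, Finset.sum_apply]
  rw [sum_comm]
  exact sum_le_sum fun k _ => abs_sum_le_sum_abs _ _

lemma l1_mulVec_le {M : Matrix (Fin n) (Fin n) ℝ} {K : ℝ} (hM : ∀ i j, 0 ≤ M i j)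
    (hK : ∀ j, ∑ i, M i j ≤ K) (v : Fin n → ℝ) : l1 (M *ᵥ v) ≤ K * l1 v :=
  calc l1 (M *ᵥ v) ≤ ∑ i, ∑ j, M i j * |v j| :=
        sum_le_sum fun i _ => (abs_sum_le_sum_abs (fun j => M i j * v j) univ).trans_eq
          (sum_congr rfl fun j _ => by rw [abs_mul, abs_of_nonneg (hM i j)])
    _ = ∑ j, (∑ i, M i j) * |v j| := by rw [sum_comm]; simp only [sum_mul]
    _ ≤ ∑ j, K * |v j| := sum_le_sum fun j _ => mul_le_mul_of_nonneg_right (hK j) (abs_nonneg _)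
    _ = K * l1 v := (mul_sum _ _ _).symm

end L1

section Imax

variable {ι κ α : Type*} [ConditionallyCompleteLinearOrder α] [Finite ι] [Finite κ]

lemma ciSup_lt_of_forall_lt [Nonempty ι] {f : ι → α} {a : α} (h : ∀ i, f i < a) :
    ⨆ i, f i < a :=
  have ⟨i, hi⟩ := Finite.exists_max f
  (ciSup_le hi).trans_lt (h i)

variable {n m : ℕ} (Ms : Matrix (Fin n) (Fin n) ℝ) (Md : Fin m → Matrix (Fin n) (Fin n) ℝ)

lemma colSum_le_Imax_left (j : Fin n) : ∑ i, Ms i j ≤ Imax Ms Md :=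
  (le_ciSup (f := fun j => ∑ i, Ms i j) (Finite.bddAbove_range _) j).trans (le_max_left _ _)

lemma colSum_le_Imax_right (l : Fin m) (j : Fin n) : ∑ i, Md l i j ≤ Imax Ms Md :=
  ((le_ciSup (Finite.bddAbove_range (fun j => ∑ i, Md l i j)) j).trans
    (le_ciSup (Finite.bddAbove_range (fun l => ⨆ j, ∑ i, Md l i j)) l)).trans (le_max_right _ _)

lemma Imax_lt_one (hn : 0 < n) (hm : 0 < m) (hMs : ∀ j, ∑ i, Ms i j < 1)
    (hMd : ∀ l j, ∑ i, Md l i j < 1) : Imax Ms Md < 1 :=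
  have : Nonempty (Fin n) := Fin.pos_iff_nonempty.mp hn
  have : Nonempty (Fin m) := Fin.pos_iff_nonempty.mp hm
  max_lt (ciSup_lt_of_forall_lt hMs) (ciSup_lt_of_forall_lt fun l => ciSup_lt_of_forall_lt (hMd l))

end Imax

section Inflow

variable {n m : ℕ} (Ms : Matrix (Fin n) (Fin n) ℝ) (Md : Fin m → Matrix (Fin n) (Fin n) ℝ)

def inflow (p : (Fin m → Fin n → ℝ) × (Fin n → ℝ)) : Fin n → ℝ :=
  Ms *ᵥ p.2 + ∑ l, Md l *ᵥ p.1 l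

lemma inflow_sub (x y : (Fin m → Fin n → ℝ) × (Fin n → ℝ)) :
    inflow Ms Md (x - y) = inflow Ms Md x - inflow Ms Md y := by
  simp only [inflow, Prod.fst_sub, Prod.snd_sub, Pi.sub_apply, mulVec_sub, sum_sub_distrib]
  abel

lemma l1_inflow_le {Ms Md} (hMs : ∀ i j, 0 ≤ Ms i j) (hMd : ∀ l i j, 0 ≤ Md l i j)
    (p : (Fin m → Fin n → ℝ) × (Fin n → ℝ)) : l1 (inflow Ms Md p) ≤ Imax Ms Md * l1P p :=
  calc l1 (inflow Ms Md p) ≤ l1 (Ms *ᵥ p.2) + ∑ l, l1 (Md l *ᵥ p.1 l) :=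
        (l1_add_le _ _).trans (add_le_add le_rfl (l1_sum_le _ _))
    _ ≤ Imax Ms Md * l1 p.2 + ∑ l, Imax Ms Md * l1 (p.1 l) :=
        add_le_add (l1_mulVec_le hMs (colSum_le_Imax_left Ms Md) _)
          (sum_le_sum fun l _ => l1_mulVec_le (hMd l) (colSum_le_Imax_right Ms Md l) _)
    _ = Imax Ms Md * l1P p := by rw [l1P, ← mul_sum]; ring

variable {a : Fin n → ℝ} {d : Fin m → (Fin m → Fin n → ℝ) → (Fin n → ℝ) → (Fin n → ℝ)}
  {psi : Fin m → Fin n → ℝ → ℝ}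

lemma Phi_fst_apply
    (hd_eq : ∀ i r s j, d i r s j = psi i j (Ms.mulVec s j + ∑ l, (Md l).mulVec (r l) j))
    (p : (Fin m → Fin n → ℝ) × (Fin n → ℝ)) (j : Fin m) (k : Fin n) :
    (Phi a Ms Md d p).1 j k =
      Waterfall.payout (a k + inflow Ms Md p k) (psi · k (inflow Ms Md p k)) j := by
  simp only [Phi, Waterfall.payout]
  split_ifs <;> simp only [inflow, vmin, vpos, Pi.add_apply, Pi.sub_apply, Finset.sum_apply, hd_eq,
    add_assoc]

lemma Phi_snd_apply
    (hd_eq : ∀ i r s j, d i r s j = psi i j (Ms.mulVec s j + ∑ l, (Md l).mulVec (r l) j))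
    (p : (Fin m → Fin n → ℝ) × (Fin n → ℝ)) (k : Fin n) :
    (Phi a Ms Md d p).2 k =
      Waterfall.surplus (a k + inflow Ms Md p k) (psi · k (inflow Ms Md p k)) := by
  simp only [Phi, Waterfall.surplus, inflow, vpos, Pi.add_apply, Pi.sub_apply, Finset.sum_apply,
    hd_eq, add_assoc]

end Inflow

lemma l1P_Phi_sub_eq {n m : ℕ} (hm : 0 < m) {a : Fin n → ℝ} {Ms : Matrix (Fin n) (Fin n) ℝ}
    {Md : Fin m → Matrix (Fin n) (Fin n) ℝ}
    {d : Fin m → (Fin m → Fin n → ℝ) → (Fin n → ℝ) → (Fin n → ℝ)}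
    {psi : Fin m → Fin n → ℝ → ℝ} (hpsi_nonneg : ∀ i j y, 0 ≤ psi i j y)
    (hpsi_mono : ∀ i j, Monotone (psi i j))
    (hd_eq : ∀ i r s j, d i r s j = psi i j (Ms.mulVec s j + ∑ l, (Md l).mulVec (r l) j))
    (hpsi_lip : ∀ j (y1 y2 : ℝ), y2 ≤ y1 → ∑ i, (psi i j y1 - psi i j y2) ≤ y1 - y2)
    (x y : (Fin m → Fin n → ℝ) × (Fin n → ℝ)) :
    l1P (Phi a Ms Md d x - Phi a Ms Md d y) = l1 (inflow Ms Md x - inflow Ms Md y) := by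
  simp only [l1P, l1, Prod.fst_sub, Prod.snd_sub, Pi.sub_apply, Phi_fst_apply Ms Md hd_eq,
    Phi_snd_apply Ms Md hd_eq]
  rw [sum_comm, ← sum_add_distrib]
  exact sum_congr rfl fun k _ =>
    Waterfall.sum_abs_payout_sub_add_abs_surplus_sub_eq_abs hm (fun i => hpsi_nonneg i k)
      (fun i => hpsi_mono i k) (hpsi_lip k) _ _ _

theorem phi_contraction_general {n m : ℕ} (hn : 0 < n) (hm : 0 < m)
    (a : Fin n → ℝ)
    (Ms : Matrix (Fin n) (Fin n) ℝ) (hMs : StrictlyLeftSubstochastic Ms)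
    (Md : Fin m → Matrix (Fin n) (Fin n) ℝ) (hMd : ∀ i, StrictlyLeftSubstochastic (Md i))
    (d : Fin m → (Fin m → Fin n → ℝ) → (Fin n → ℝ) → (Fin n → ℝ))
    (psi : Fin m → Fin n → ℝ → ℝ)
    (hpsi_nonneg : ∀ i j y, 0 ≤ psi i j y)
    (hpsi_mono : ∀ i j, Monotone (psi i j))
    (hd_eq : ∀ i r s j, d i r s j = psi i j (Ms.mulVec s j + ∑ l, (Md l).mulVec (r l) j))
    (hpsi_lip : ∀ j (y1 y2 : ℝ), y2 ≤ y1 → ∑ i, (psi i j y1 - psi i j y2) ≤ y1 - y2) :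
    (∀ x y : (Fin m → Fin n → ℝ) × (Fin n → ℝ),
      l1P (Phi a Ms Md d x - Phi a Ms Md d y) ≤ Imax Ms Md * l1P (x - y)) ∧
    Imax Ms Md < 1 :=
  ⟨fun x y => by
    rw [l1P_Phi_sub_eq hm hpsi_nonneg hpsi_mono hd_eq hpsi_lip, ← inflow_sub]
    exact l1_inflow_le hMs.1 (fun l => (hMd l).1) _,
   Imax_lt_one Ms Md hn hm hMs.2 fun l => (hMd l).2⟩

/-- Contraction property: under the seniority structure condition, Φ is a strict
contraction with constant I^max < 1 in the ℓ¹-metric. -/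
theorem phi_contraction {n m : ℕ} (hn : 0 < n) (hm : 0 < m)
    (a : Fin n → ℝ) (ha : ∀ k, 0 ≤ a k)
    (Ms : Matrix (Fin n) (Fin n) ℝ) (hMs : StrictlyLeftSubstochastic Ms)
    (Md : Fin m → Matrix (Fin n) (Fin n) ℝ) (hMd : ∀ i, StrictlyLeftSubstochastic (Md i))
    (d : Fin m → (Fin m → Fin n → ℝ) → (Fin n → ℝ) → (Fin n → ℝ))
    (hd : ∀ i r s k, 0 ≤ d i r s k)
    (psi : Fin m → Fin n → ℝ → ℝ)
    (hpsi_nonneg : ∀ i j y, 0 ≤ psi i j y)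
    (hpsi_mono : ∀ i j, Monotone (psi i j))
    (hd_eq : ∀ i r s j, d i r s j = psi i j (Ms.mulVec s j + ∑ l, (Md l).mulVec (r l) j))
    (hpsi_lip : ∀ j (y1 y2 : ℝ), y2 ≤ y1 → ∑ i, (psi i j y1 - psi i j y2) ≤ y1 - y2) :
    (∀ x y : (Fin m → Fin n → ℝ) × (Fin n → ℝ),
      l1P (Phi a Ms Md d x - Phi a Ms Md d y) ≤ Imax Ms Md * l1P (x - y)) ∧
    Imax Ms Md < 1 :=
  phi_contraction_general hn hm a Ms hMs Md hMd d psi hpsi_nonneg hpsi_mono hd_eq hpsi_lip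
end
end

section
/- Let m ≥ 1 and let ψ¹,…,ψ^m : ℝ → [0,∞) be monotonically increasing functions such that for all z¹ ≥ z² in ℝ one has z¹ − z² ≥ Σ_{i=1}^m (ψⁱ(z¹) − ψⁱ(z²)). Then for all x, y¹, y² ∈ ℝ: |y¹ − y²| = |min{ψ¹(y¹), x + y¹} − min{ψ¹(y²), x + y²}| + Σ_{j=1}^{m−1} |min{ψ^{j+1}(y¹), (x + y¹ − Σ_{i=1}^{j} ψⁱ(y¹))⁺} − min{ψ^{j+1}(y²), (x + y² − Σ_{i=1}^{j} ψⁱ(y²))⁺}| + |(x + y¹ − Σ_{i=1}^{m} ψⁱ(y¹))⁺ − (x + y² − Σ_{i=1}^{m} ψⁱ(y²))⁺|. -/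
open Finset

/-!
Split the value `x + y` among the creditors in order of seniority: creditor `j` receives
`min (ψʲ y)` of what is left after creditors `1, …, j - 1`, and the last term is the surplus.
These payments telescope to `x + y`. The hypothesis on `ψ` makes `y - Σ_{i ≤ j} ψⁱ y` monotone
in `y` for every `j ≤ m`, so every payment is monotone in `y`. Hence all differences in the identity
have the sign of `y¹ - y²`, and their absolute values add up to `|y¹ - y²|`.
-/

lemma min_add_max_sub_zero (a t : ℝ) : min a t + max (t - a) 0 = t := by
  rcases le_total a t with h | h
  · rw [min_eq_left h, max_eq_left (by linarith)]; ring
  · rw [min_eq_right h, max_eq_right (by linarith)]; ring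

lemma min_max_zero_add_max_sub_zero {a : ℝ} (ha : 0 ≤ a) (t : ℝ) :
    min a (max t 0) + max (t - a) 0 = max t 0 := by
  rcases le_total t 0 with h | h
  · rw [max_eq_right h, max_eq_right (by linarith), min_eq_right ha, add_zero]
  · rw [max_eq_left h, min_add_max_sub_zero]

section Waterfall

variable (a : ℕ → ℝ) (w : ℝ)

lemma sum_min_max_add_max_sub_sum_Icc (n : ℕ) (ha : ∀ i ∈ Icc 1 (n + 1), 0 ≤ a i) :
    ∑ j ∈ Icc 1 n, min (a (j + 1)) (max (w - ∑ i ∈ Icc 1 j, a i) 0) +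
      max (w - ∑ i ∈ Icc 1 (n + 1), a i) 0 = max (w - a 1) 0 := by
  induction n with
  | zero => simp
  | succ n ih =>
    have ha' : ∀ i ∈ Icc 1 (n + 1), 0 ≤ a i := fun i hi =>
      ha i (Icc_subset_Icc_right (Nat.le_succ _) hi)
    have hlast : 0 ≤ a (n + 2) := ha (n + 2) (mem_Icc.2 ⟨by omega, le_rfl⟩)
    rw [sum_Icc_succ_top (by omega), sum_Icc_succ_top (b := n + 1) (by omega), sub_add_eq_sub_sub]
    linarith [ih ha', min_max_zero_add_max_sub_zero hlast (w - ∑ i ∈ Icc 1 (n + 1), a i)]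

lemma min_add_sum_min_max_add_max_sub_sum_Icc {m : ℕ} (hm : 1 ≤ m)
    (ha : ∀ i ∈ Icc 1 m, 0 ≤ a i) :
    min (a 1) w + ∑ j ∈ Icc 1 (m - 1), min (a (j + 1)) (max (w - ∑ i ∈ Icc 1 j, a i) 0) +
      max (w - ∑ i ∈ Icc 1 m, a i) 0 = w := by
  obtain ⟨n, rfl⟩ : ∃ n, m = n + 1 := ⟨m - 1, by omega⟩
  rw [Nat.add_sub_cancel, add_assoc, sum_min_max_add_max_sub_sum_Icc a w n ha,
    min_add_max_sub_zero]

end Waterfall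

lemma monotone_add_sub_sum_of_subset {ι : Type*} {s t : Finset ι} {ψ : ι → ℝ → ℝ}
    (hst : s ⊆ t) (hψ : ∀ i ∈ t, Monotone (ψ i))
    (hlip : ∀ z1 z2 : ℝ, z2 ≤ z1 → ∑ i ∈ t, (ψ i z1 - ψ i z2) ≤ z1 - z2) (x : ℝ) :
    Monotone fun y => x + y - ∑ i ∈ s, ψ i y := by
  intro y2 y1 h
  have hs : ∑ i ∈ s, (ψ i y1 - ψ i y2) ≤ ∑ i ∈ t, (ψ i y1 - ψ i y2) :=
    sum_le_sum_of_subset_of_nonneg hst fun i hi _ => sub_nonneg.2 (hψ i hi h)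
  have := hs.trans (hlip y1 y2 h)
  rw [sum_sub_distrib] at this
  dsimp only
  linarith

/-- The key identity for the contraction argument: for monotone nonnegative ψ¹,…,ψ^m with
Σᵢ(ψⁱ(z¹) − ψⁱ(z²)) ≤ z¹ − z² for all z¹ ≥ z², the sum of the absolute differences of the
right-hand sides of the liquidation value equations equals |y¹ − y²|. -/
theorem seniority_abs_diff_identity (m : ℕ) (hm : 1 ≤ m)
    (psi : ℕ → ℝ → ℝ)
    (hpsi_nonneg : ∀ i ∈ Finset.Icc 1 m, ∀ z : ℝ, 0 ≤ psi i z)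
    (hpsi_mono : ∀ i ∈ Finset.Icc 1 m, Monotone (psi i))
    (hpsi_lip : ∀ z1 z2 : ℝ, z2 ≤ z1 →
      ∑ i ∈ Finset.Icc 1 m, (psi i z1 - psi i z2) ≤ z1 - z2)
    (x y1 y2 : ℝ) :
    |y1 - y2| =
      |min (psi 1 y1) (x + y1) - min (psi 1 y2) (x + y2)| +
      (∑ j ∈ Finset.Icc 1 (m - 1),
        |min (psi (j + 1) y1) (max (x + y1 - ∑ i ∈ Finset.Icc 1 j, psi i y1) 0) -
         min (psi (j + 1) y2) (max (x + y2 - ∑ i ∈ Finset.Icc 1 j, psi i y2) 0)|) +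
      |max (x + y1 - ∑ i ∈ Finset.Icc 1 m, psi i y1) 0 -
       max (x + y2 - ∑ i ∈ Finset.Icc 1 m, psi i y2) 0| := by
  wlog h : y2 ≤ y1 generalizing y1 y2
  · simpa only [abs_sub_comm] using this y2 y1 (le_of_not_ge h)
  have hleft {j : ℕ} (hj : j ≤ m) : Monotone fun y => x + y - ∑ i ∈ Icc 1 j, psi i y :=
    monotone_add_sub_sum_of_subset (Icc_subset_Icc_right hj) hpsi_mono hpsi_lip x
  have hfirst : Monotone fun y => min (psi 1 y) (x + y) :=
    (hpsi_mono 1 (mem_Icc.2 ⟨le_rfl, hm⟩)).min (monotone_id.const_add x)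
  have hmiddle (j : ℕ) (hj : j ∈ Icc 1 (m - 1)) :
      Monotone fun y => min (psi (j + 1) y) (max (x + y - ∑ i ∈ Icc 1 j, psi i y) 0) := by
    obtain ⟨hj1, hj2⟩ := mem_Icc.1 hj
    exact (hpsi_mono (j + 1) (mem_Icc.2 ⟨by omega, by omega⟩)).min
      ((hleft (by omega)).max monotone_const)
  have hlast : Monotone fun y => max (x + y - ∑ i ∈ Icc 1 m, psi i y) 0 :=
    (hleft le_rfl).max monotone_const
  rw [abs_of_nonneg (sub_nonneg.2 h), abs_of_nonneg (sub_nonneg.2 (hfirst h)),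
    abs_of_nonneg (sub_nonneg.2 (hlast h)),
    sum_congr rfl fun j hj => abs_of_nonneg (sub_nonneg.2 (hmiddle j hj h)), sum_sub_distrib]
  have hsplit (y : ℝ) := min_add_sum_min_max_add_max_sub_sum_Icc (fun i => psi i y) (x + y) hm
    fun i hi => hpsi_nonneg i hi y
  linarith [hsplit y1, hsplit y2]
end

section
/- Two-firm equity cross-ownership: for all a₁, a₂, b₁, b₂ ≥ 0, the system of equations s₁ = (a₁ + 0.5·s₂ − b₁)⁺ and s₂ = (a₂ + 0.5·s₁ − b₂)⁺ has exactly one solution (s₁, s₂) ∈ ℝ², and this solution satisfies s₁ ≥ 0 and s₂ ≥ 0. -/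
/-! The equity values are the fixed points of the map
`(s₁, s₂) ↦ ((a₁ + s₂/2 - b₁)⁺, (a₂ + s₁/2 - b₂)⁺)` on `ℝ × ℝ`. Since `t ↦ t⁺` is 1-Lipschitz,
each coordinate is 1/2-Lipschitz in the other one, so the map is a contraction for the sup
metric of `ℝ × ℝ`, and the Banach fixed-point theorem gives exactly one fixed point. -/

open Function

theorem ContractingWith.existsUnique_isFixedPt {α : Type*} [MetricSpace α] [Nonempty α]
    [CompleteSpace α] {K : NNReal} {f : α → α} (hf : ContractingWith K f) :
    ∃! x, IsFixedPt f x :=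
  ⟨fixedPoint f hf, hf.fixedPoint_isFixedPt, fun _ hx => hf.fixedPoint_unique hx⟩

theorem contractingWith_prodMk_snd_fst {α β : Type*} [EMetricSpace α] [EMetricSpace β]
    {K : NNReal} {f : β → α} {g : α → β} (hf : LipschitzWith K f) (hg : LipschitzWith K g)
    (hK : K < 1) : ContractingWith K fun p : α × β => (f p.2, g p.1) :=
  ⟨hK, by simpa using (hf.comp LipschitzWith.prod_snd).prodMk (hg.comp LipschitzWith.prod_fst)⟩

theorem lipschitzWith_max_affine_zero (a k b : ℝ) :
    LipschitzWith ‖k‖₊ fun x => max (a + k * x - b) 0 :=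
  (LipschitzWith.of_dist_le_mul fun x y => by
    simp [Real.dist_eq, ← mul_sub, abs_mul]).max_const 0

theorem two_firm_equity_cross_ownership_general (a₁ a₂ b₁ b₂ : ℝ) :
    (∃! p : ℝ × ℝ,
      p.1 = max (a₁ + 0.5 * p.2 - b₁) 0 ∧ p.2 = max (a₂ + 0.5 * p.1 - b₂) 0) ∧
    ∀ p : ℝ × ℝ,
      (p.1 = max (a₁ + 0.5 * p.2 - b₁) 0 ∧ p.2 = max (a₂ + 0.5 * p.1 - b₂) 0) →
      0 ≤ p.1 ∧ 0 ≤ p.2 := by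
  set T : ℝ × ℝ → ℝ × ℝ := fun p => (max (a₁ + 0.5 * p.2 - b₁) 0, max (a₂ + 0.5 * p.1 - b₂) 0)
  have hfixed : ∀ p, IsFixedPt T p ↔
      (p.1 = max (a₁ + 0.5 * p.2 - b₁) 0 ∧ p.2 = max (a₂ + 0.5 * p.1 - b₂) 0) := fun p => by
    simp only [IsFixedPt, T, Prod.ext_iff, eq_comm]
  have hK : ‖(0.5 : ℝ)‖₊ < 1 := by
    rw [← NNReal.coe_lt_coe, coe_nnnorm, Real.norm_eq_abs]
    norm_num
  have hT : ContractingWith ‖(0.5 : ℝ)‖₊ T :=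
    contractingWith_prodMk_snd_fst (lipschitzWith_max_affine_zero a₁ 0.5 b₁)
      (lipschitzWith_max_affine_zero a₂ 0.5 b₂) hK
  refine ⟨by simpa only [hfixed] using hT.existsUnique_isFixedPt, fun p hp => ?_⟩
  rw [hp.1, hp.2]
  exact ⟨le_max_right _ _, le_max_right _ _⟩

/-- Two-firm 50% equity cross-ownership: the system s₁ = (a₁ + 0.5·s₂ − b₁)⁺,
s₂ = (a₂ + 0.5·s₁ − b₂)⁺ has exactly one solution, and it is nonnegative. -/
theorem two_firm_equity_cross_ownership (a₁ a₂ b₁ b₂ : ℝ)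
    (ha₁ : 0 ≤ a₁) (ha₂ : 0 ≤ a₂) (hb₁ : 0 ≤ b₁) (hb₂ : 0 ≤ b₂) :
    (∃! p : ℝ × ℝ,
      p.1 = max (a₁ + 0.5 * p.2 - b₁) 0 ∧ p.2 = max (a₂ + 0.5 * p.1 - b₂) 0) ∧
    ∀ p : ℝ × ℝ,
      (p.1 = max (a₁ + 0.5 * p.2 - b₁) 0 ∧ p.2 = max (a₂ + 0.5 * p.1 - b₂) 0) →
      0 ≤ p.1 ∧ 0 ≤ p.2 :=
  two_firm_equity_cross_ownership_general a₁ a₂ b₁ b₂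
end

section
/- Two-firm debt cross-ownership: for all a₁, a₂, b₁, b₂ ≥ 0, the system of equations r₁ = min{b₁, (a₁ + 0.5·r₂)⁺} and r₂ = min{b₂, (a₂ + 0.5·r₁)⁺} has exactly one solution (r₁, r₂) ∈ ℝ², and this solution satisfies 0 ≤ r₁ ≤ b₁ and 0 ≤ r₂ ≤ b₂. -/
/-!
Both equations are fixed-point conditions for one map of `ℝ × ℝ`. Truncating to `[0, b]` is
1-Lipschitz and each firm's payment depends on the other's only through the factor `1/2`, so
this map is a `1/2`-contraction for the sup distance of `ℝ × ℝ`; Banach's fixed-point theorem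
gives exactly one solution, and every value of the map lies in `[0, b₁] × [0, b₂]`.
-/

open NNReal Function

lemma lipschitzWith_min_max_const_add_mul (a b : ℝ) (c : ℝ≥0) :
    LipschitzWith c fun x : ℝ => min b (max (a + c * x) 0) := by
  have h : LipschitzWith c fun x : ℝ => a + c * x := .of_dist_le_mul fun x y => by
    rw [Real.dist_eq, Real.dist_eq, add_sub_add_left_eq_sub, ← mul_sub, abs_mul, NNReal.abs_eq]
  exact (h.max_const 0).const_min b

/-- The clearing map of two firms with assets `aᵢ` and debts `bᵢ`, each holding the fraction `c`
of the other's debt. -/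
noncomputable def crossClearingMap (a₁ a₂ b₁ b₂ : ℝ) (c : ℝ≥0) (p : ℝ × ℝ) : ℝ × ℝ :=
  (min b₁ (max (a₁ + c * p.2) 0), min b₂ (max (a₂ + c * p.1) 0))

section

variable {a₁ a₂ b₁ b₂ : ℝ} {c : ℝ≥0}

lemma contractingWith_crossClearingMap (hc : c < 1) :
    ContractingWith c (crossClearingMap a₁ a₂ b₁ b₂ c) := by
  refine ⟨hc, ?_⟩
  have hF : LipschitzWith (max (c * 1) (c * 1)) (crossClearingMap a₁ a₂ b₁ b₂ c) :=
    ((lipschitzWith_min_max_const_add_mul a₁ b₁ c).comp LipschitzWith.prod_snd).prodMk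
      ((lipschitzWith_min_max_const_add_mul a₂ b₂ c).comp LipschitzWith.prod_fst)
  rwa [mul_one, max_self] at hF

lemma existsUnique_isFixedPt_crossClearingMap (hc : c < 1) :
    ∃! p, IsFixedPt (crossClearingMap a₁ a₂ b₁ b₂ c) p :=
  have hF : ContractingWith c (crossClearingMap a₁ a₂ b₁ b₂ c) :=
    contractingWith_crossClearingMap hc
  ⟨_, hF.fixedPoint_isFixedPt, fun _ => hF.fixedPoint_unique⟩

lemma crossClearingMap_mem_Icc (hb₁ : 0 ≤ b₁) (hb₂ : 0 ≤ b₂) (p : ℝ × ℝ) :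
    crossClearingMap a₁ a₂ b₁ b₂ c p ∈ Set.Icc 0 (b₁, b₂) :=
  ⟨⟨le_min hb₁ (le_max_right _ _), le_min hb₂ (le_max_right _ _)⟩,
    ⟨min_le_left _ _, min_le_left _ _⟩⟩

lemma isFixedPt_crossClearingMap_half_iff (p : ℝ × ℝ) :
    IsFixedPt (crossClearingMap a₁ a₂ b₁ b₂ (1 / 2)) p ↔
      p.1 = min b₁ (max (a₁ + 0.5 * p.2) 0) ∧ p.2 = min b₂ (max (a₂ + 0.5 * p.1) 0) := by
  rw [IsFixedPt, crossClearingMap, Prod.ext_iff, eq_comm, @eq_comm _ _ p.2]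
  norm_num

end

theorem two_firm_debt_cross_ownership_general (a₁ a₂ b₁ b₂ : ℝ)
    (hb₁ : 0 ≤ b₁) (hb₂ : 0 ≤ b₂) :
    (∃! p : ℝ × ℝ,
      p.1 = min b₁ (max (a₁ + 0.5 * p.2) 0) ∧ p.2 = min b₂ (max (a₂ + 0.5 * p.1) 0)) ∧
    ∀ p : ℝ × ℝ,
      (p.1 = min b₁ (max (a₁ + 0.5 * p.2) 0) ∧ p.2 = min b₂ (max (a₂ + 0.5 * p.1) 0)) →
      (0 ≤ p.1 ∧ p.1 ≤ b₁) ∧ (0 ≤ p.2 ∧ p.2 ≤ b₂) := by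
  simp_rw [← isFixedPt_crossClearingMap_half_iff]
  refine ⟨existsUnique_isFixedPt_crossClearingMap (by norm_num), fun p hp => ?_⟩
  have hbox : p ∈ Set.Icc 0 (b₁, b₂) := hp ▸ crossClearingMap_mem_Icc hb₁ hb₂ p
  obtain ⟨⟨h₁, h₂⟩, h₁', h₂'⟩ := hbox
  exact ⟨⟨h₁, h₁'⟩, h₂, h₂'⟩

/-- Two-firm 50% debt cross-ownership: the system r₁ = min{b₁, (a₁ + 0.5·r₂)⁺},
r₂ = min{b₂, (a₂ + 0.5·r₁)⁺} has exactly one solution, and it satisfies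
0 ≤ r₁ ≤ b₁ and 0 ≤ r₂ ≤ b₂. -/
theorem two_firm_debt_cross_ownership (a₁ a₂ b₁ b₂ : ℝ)
    (ha₁ : 0 ≤ a₁) (ha₂ : 0 ≤ a₂) (hb₁ : 0 ≤ b₁) (hb₂ : 0 ≤ b₂) :
    (∃! p : ℝ × ℝ,
      p.1 = min b₁ (max (a₁ + 0.5 * p.2) 0) ∧ p.2 = min b₂ (max (a₂ + 0.5 * p.1) 0)) ∧
    ∀ p : ℝ × ℝ,
      (p.1 = min b₁ (max (a₁ + 0.5 * p.2) 0) ∧ p.2 = min b₂ (max (a₂ + 0.5 * p.1) 0)) →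
      (0 ≤ p.1 ∧ p.1 ≤ b₁) ∧ (0 ≤ p.2 ∧ p.2 ≤ b₂) :=
  two_firm_debt_cross_ownership_general a₁ a₂ b₁ b₂ hb₁ hb₂
end

section
/- No price equilibrium under maximal equity cross-ownership: let n ≥ 1, let Mˢ be an n×n real matrix with nonnegative entries in which every column sum equals exactly 1 (a left stochastic matrix), and let a ∈ ℝ^n with a ≥ 0 and ‖a‖₁ > 0. Then there is no s ∈ ℝ^n satisfying s = (a + Mˢ·s)⁺ (positive part taken componentwise). -/
open Matrix Finset

/-! Every solution of `s = (a + Mˢ s)⁺` satisfies `a + Mˢ s ≤ s`. Summing over the firms, column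
sums equal to one give `∑ (Mˢ s) = ∑ s`, hence `∑ a ≤ 0`, contradicting `a ≥ 0` with `‖a‖₁ > 0`. -/

namespace Matrix

variable {R m n : Type*} [Fintype m] [Fintype n]

theorem sum_mulVec_of_sum_col_eq_one [CommSemiring R] {M : Matrix m n R}
    (hM : ∀ j, ∑ i, M i j = 1) (x : n → R) : ∑ i, (M *ᵥ x) i = ∑ j, x j := by
  have hcol : (1 : m → R) ᵥ* M = 1 := funext fun j => by simp [vecMul, dotProduct, hM]
  simpa only [hcol, one_dotProduct] using dotProduct_mulVec (1 : m → R) M x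

theorem sum_nonpos_of_add_mulVec_le [CommRing R] [PartialOrder R] [IsOrderedRing R]
    {M : Matrix n n R} (hM : ∀ j, ∑ i, M i j = 1) {a s : n → R}
    (h : ∀ i, a i + (M *ᵥ s) i ≤ s i) : ∑ i, a i ≤ 0 := by
  have hsum := sum_le_sum fun i (_ : i ∈ univ) => h i
  rwa [sum_add_distrib, sum_mulVec_of_sum_col_eq_one hM, add_le_iff_nonpos_left] at hsum

end Matrix

theorem no_equilibrium_maximal_cross_ownership_general {n : ℕ}
    (Ms : Matrix (Fin n) (Fin n) ℝ)
    (hMs_col : ∀ j, ∑ i, Ms i j = 1)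
    (a : Fin n → ℝ) (ha : ∀ k, 0 ≤ a k) (ha_pos : 0 < ∑ k, |a k|) :
    ¬ ∃ s : Fin n → ℝ, ∀ k, s k = max (a k + Ms.mulVec s k) 0 := by
  rintro ⟨s, hs⟩
  have ha_sum_nonpos : ∑ k, a k ≤ 0 :=
    sum_nonpos_of_add_mulVec_le hMs_col fun k => (hs k).symm ▸ le_max_left _ _
  simp only [abs_of_nonneg (ha _)] at ha_pos
  linarith

/-- No price equilibrium under maximal equity cross-ownership: if Mˢ is left stochastic
(nonnegative entries, all column sums equal 1) and a ≥ 0 with ‖a‖₁ > 0, then the equity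
equation s = (a + Mˢ·s)⁺ has no solution. -/
theorem no_equilibrium_maximal_cross_ownership {n : ℕ} (hn : 0 < n)
    (Ms : Matrix (Fin n) (Fin n) ℝ)
    (hMs_nonneg : ∀ i j, 0 ≤ Ms i j)
    (hMs_col : ∀ j, ∑ i, Ms i j = 1)
    (a : Fin n → ℝ) (ha : ∀ k, 0 ≤ a k) (ha_pos : 0 < ∑ k, |a k|) :
    ¬ ∃ s : Fin n → ℝ, ∀ k, s k = max (a k + Ms.mulVec s k) 0 :=
  no_equilibrium_maximal_cross_ownership_general Ms hMs_col a ha ha_pos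
end
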